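/- arXiv:1602.07422 — 2 statements merged into one kernel-verified Lean document; each statement's English description precedes it below -/
import Mathlib

section
/- Let G_Y = (V_Y, E_Y) be a connected finite graph, E_Z ⊆ E_Y, and L an integer with 0 ≤ L ≤ |E_Z|. Let Q be the polytope of vectors y ∈ ℝ^{E_Y} with y ≥ 0 satisfying Σ_{e∈E_Y} y_e = |V_Y| − 1, Σ_{e∈E_Y(U)} y_e ≤ |U| − 1 for every nonempty proper subset U ⊂ V_Y, and Σ_{e∈E_Z} y_e ≥ L. If y is a vertex solution (extreme point) of Q with y_e > 0 for every e ∈ E_Y and E_Y is nonempty, then there exists an edge e' ∈ E_Y with y_{e'} = 1. -/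
open Finset

/-- The set `E_Y(U)` of edges of `E_Y` having both endpoints in `U`
(edges are given by an endpoint map `p`). -/
def edgesIn {V ε : Type*} [DecidableEq V] (p : ε → V × V)
    (EY : Finset ε) (U : Finset V) : Finset ε :=
  EY.filter fun e => (p e).1 ∈ U ∧ (p e).2 ∈ U

/-- The (multi)graph on vertex set `V` with edge set `E` (endpoints given by `p`)
is connected: every nonempty proper vertex subset is left by some edge. -/
def ConnectedOn {V ε : Type*} [Fintype V] [DecidableEq V]
    (p : ε → V × V) (E : Finset ε) : Prop :=
  ∀ U : Finset V, U.Nonempty → U ≠ Finset.univ →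
    ∃ e ∈ E, ((p e).1 ∈ U ∧ (p e).2 ∉ U) ∨ ((p e).1 ∉ U ∧ (p e).2 ∈ U)

/-- The polytope `Q` of vectors `y ∈ ℝ^{E_Y}` (coordinates outside `E_Y` fixed to `0`)
satisfying the spanning-tree constraints for `G_Y = (V_Y, E_Y)` together with
`∑_{e ∈ E_Z} y_e ≥ L`. -/
def QPolytope {V ε : Type*} [Fintype V] [DecidableEq V]
    (pY : ε → V × V) (EY EZ : Finset ε) (L : ℕ) : Set (ε → ℝ) :=
  {y | (∀ e, 0 ≤ y e) ∧ (∀ e ∉ EY, y e = 0) ∧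
       (∑ e ∈ EY, y e = (Fintype.card V : ℝ) - 1) ∧
       (∀ U : Finset V, U.Nonempty → U ≠ Finset.univ →
         ∑ e ∈ edgesIn pY EY U, y e ≤ (U.card : ℝ) - 1) ∧
       ((L : ℝ) ≤ ∑ e ∈ EZ, y e)}

/-! Suppose `0 < y e < 1` on `E_Y`. If `z ≠ 0` keeps every constraint that is tight at `y`
tight, then `y ± t z ∈ Q` for small `t`, so `y` is not a vertex.

Tight vertex sets uncross: a nonempty intersection of tight sets is tight. Hence a minimal
tight set `S` with `|S| ≥ 2` is either contained in a tight set `U` or meets it in at most one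
vertex, so no tight set separates two edges of `E_Y(S)`, and `z = 𝟙_a - 𝟙_b` preserves every
subtour constraint for `a, b ∈ E_Y(S)`. As `y < 1`, `E_Y(S)` has at least two edges, so the
`E_Z`-constraint must be tight and must separate every such pair. A second block of at least two
mutually inseparable edges disjoint from `E_Y(S)` (the edges of another minimal tight set, or
`E_Y(S₂) \ E_Y(S)` for a minimal tight `S₂ ⊋ S`) gives `z = (𝟙_a - 𝟙_b) - (𝟙_c - 𝟙_d)`,
which preserves the `E_Z`-constraint as well. Finally `S = V_Y` is impossible: then `E_Z ∩ E_Y`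
is a single edge `c` with `y c = L`, an integer in `(0, 1)`. -/

open Filter Topology

theorem eventually_add_mul_le {a b c : ℝ} (h : a ≤ b) (hc : a = b → c = 0) :
    ∀ᶠ t in 𝓝 (0 : ℝ), a + t * c ≤ b := by
  rcases h.lt_or_eq with h | h
  · have hlim : Tendsto (fun t : ℝ => a + t * c) (𝓝 0) (𝓝 a) := by
      simpa using ((tendsto_id (x := 𝓝 (0 : ℝ))).mul_const c).const_add a
    exact (hlim.eventually (gt_mem_nhds h)).mono fun _ => le_of_lt
  · exact Eventually.of_forall fun t => by simp [hc h, h]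

theorem eventually_le_add_mul {a b c : ℝ} (h : b ≤ a) (hc : a = b → c = 0) :
    ∀ᶠ t in 𝓝 (0 : ℝ), b ≤ a + t * c := by
  filter_upwards [eventually_add_mul_le (c := -c) (neg_le_neg h)
    fun h' => by simp [hc (neg_inj.mp h')]] with t ht
  linarith

theorem notMem_extremePoints_of_eventually_add_smul_mem {E : Type*} [AddCommGroup E]
    [Module ℝ E] {P : Set E} {y z : E} (hz : z ≠ 0) (h : ∀ᶠ t in 𝓝 (0 : ℝ), y + t • z ∈ P) :
    y ∉ P.extremePoints ℝ := by
  intro hy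
  obtain ⟨δ, hδ, hball⟩ := Metric.eventually_nhds_iff.mp h
  have hmem : ∀ s : ℝ, |s| = δ / 2 → y + s • z ∈ P := fun s hs =>
    hball (by rw [Real.dist_0_eq_abs, hs]; linarith)
  have hseg : y ∈ openSegment ℝ (y + (δ / 2) • z) (y + (-(δ / 2)) • z) :=
    ⟨1 / 2, 1 / 2, by norm_num, by norm_num, by norm_num, by module⟩
  have hfix := hy.2 (hmem _ (abs_of_pos (by positivity)))
    (hmem _ (by rw [abs_neg, abs_of_pos (by positivity)])) hseg
  exact hz ((smul_eq_zero.mp (add_eq_left.mp hfix)).resolve_left (by positivity))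

section Edges

variable {V ε : Type*} [DecidableEq V] {pY : ε → V × V} {EY : Finset ε}

@[simp]
theorem mem_edgesIn {U : Finset V} {e : ε} :
    e ∈ edgesIn pY EY U ↔ e ∈ EY ∧ (pY e).1 ∈ U ∧ (pY e).2 ∈ U :=
  mem_filter

theorem edgesIn_subset {U : Finset V} : edgesIn pY EY U ⊆ EY :=
  filter_subset _ _

theorem edgesIn_mono {U W : Finset V} (h : U ⊆ W) : edgesIn pY EY U ⊆ edgesIn pY EY W :=
  fun _ he => by simp only [mem_edgesIn] at he ⊢; exact ⟨he.1, h he.2.1, h he.2.2⟩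

theorem edgesIn_inter [DecidableEq ε] (U W : Finset V) :
    edgesIn pY EY U ∩ edgesIn pY EY W = edgesIn pY EY (U ∩ W) := by
  ext e; simp only [mem_inter, mem_edgesIn]; tauto

@[simp]
theorem edgesIn_univ [Fintype V] : edgesIn pY EY (univ : Finset V) = EY := by
  simp [edgesIn]

end Edges

section TightSets

variable {V ε : Type*} [DecidableEq V]

def IsTightSet (pY : ε → V × V) (EY : Finset ε) (y : ε → ℝ) (U : Finset V) : Prop :=
  U.Nonempty ∧ ∑ e ∈ edgesIn pY EY U, y e = (U.card : ℝ) - 1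

def IsMinimalTightSet (pY : ε → V × V) (EY : Finset ε) (y : ε → ℝ) (S : Finset V) : Prop :=
  Minimal (fun U => IsTightSet pY EY y U ∧ 1 < U.card) S

def TightInseparable (pY : ε → V × V) (EY : Finset ε) (y : ε → ℝ) (a b : ε) : Prop :=
  ∀ U, IsTightSet pY EY y U → (a ∈ edgesIn pY EY U ↔ b ∈ edgesIn pY EY U)

variable {pY : ε → V × V} {EY EZ : Finset ε} {L : ℕ} {y : ε → ℝ}

theorem one_lt_card_of_one_le_sum {D : Finset ε} (hlt : ∀ e ∈ D, y e < 1)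
    (hsum : 1 ≤ ∑ e ∈ D, y e) : 1 < D.card := by
  have hD : D.Nonempty := nonempty_of_sum_ne_zero (f := y) (by linarith)
  have hcard : ∑ e ∈ D, y e < D.card := by simpa using sum_lt_sum_of_nonempty hD hlt
  exact_mod_cast (by linarith : (1 : ℝ) < D.card)

theorem exists_isMinimalTightSet_subset {U : Finset V} (hU : IsTightSet pY EY y U)
    (hU₁ : 1 < U.card) : ∃ S ⊆ U, IsMinimalTightSet pY EY y S :=
  exists_minimal_le_of_wellFoundedLT _ U ⟨hU, hU₁⟩

theorem tightInseparable_of_forall_subset {X : Finset V} {A : Finset ε}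
    (hAX : A ⊆ edgesIn pY EY X)
    (hX : ∀ U, IsTightSet pY EY y U → ∀ e ∈ A, e ∈ edgesIn pY EY U → X ⊆ U)
    {a b : ε} (ha : a ∈ A) (hb : b ∈ A) : TightInseparable pY EY y a b :=
  fun U hU => ⟨fun h => edgesIn_mono (hX U hU a ha h) (hAX hb),
    fun h => edgesIn_mono (hX U hU b hb h) (hAX ha)⟩

theorem IsMinimalTightSet.one_lt_card_edgesIn (hlt : ∀ e ∈ EY, y e < 1) {S : Finset V}
    (hS : IsMinimalTightSet pY EY y S) : 1 < (edgesIn pY EY S).card := by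
  refine one_lt_card_of_one_le_sum (fun e he => hlt e (edgesIn_subset he)) ?_
  have hcard : (2 : ℝ) ≤ S.card := by exact_mod_cast hS.1.2
  linarith [hS.1.1.2]

variable [Fintype V]

theorem sum_edgesIn_le (hy : y ∈ QPolytope pY EY EZ L) {U : Finset V} (hU : U.Nonempty) :
    ∑ e ∈ edgesIn pY EY U, y e ≤ (U.card : ℝ) - 1 := by
  by_cases hUu : U = univ
  · subst hUu; simp [hy.2.2.1]
  · exact hy.2.2.2.1 U hU hUu

theorem isTightSet_univ [Nonempty V] (hy : y ∈ QPolytope pY EY EZ L) :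
    IsTightSet pY EY y univ :=
  ⟨univ_nonempty, by simpa using hy.2.2.1⟩

theorem one_lt_card_of_mem_edgesIn (hy : y ∈ QPolytope pY EY EZ L) {U : Finset V} {e : ε}
    (he : e ∈ edgesIn pY EY U) (hye : 0 < y e) : 1 < U.card := by
  have hle : y e ≤ ∑ e ∈ edgesIn pY EY U, y e := single_le_sum (fun e _ => hy.1 e) he
  have hU := sum_edgesIn_le hy ⟨_, (mem_edgesIn.mp he).2.1⟩
  exact_mod_cast (by linarith : (1 : ℝ) < U.card)

theorem le_one_of_mem_QPolytope (hy : y ∈ QPolytope pY EY EZ L) {e : ε} (he : e ∈ EY) :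
    y e ≤ 1 := by
  set U : Finset V := {(pY e).1, (pY e).2}
  have heU : e ∈ edgesIn pY EY U := by simp [U, he]
  have hle : y e ≤ ∑ e ∈ edgesIn pY EY U, y e := single_le_sum (fun e _ => hy.1 e) heU
  have hU := sum_edgesIn_le hy (insert_nonempty _ _ : U.Nonempty)
  have hcard : (U.card : ℝ) ≤ 2 := by exact_mod_cast card_le_two
  linarith

variable [DecidableEq ε]

theorem IsTightSet.inter (hy : y ∈ QPolytope pY EY EZ L) {A B : Finset V}
    (hA : IsTightSet pY EY y A) (hB : IsTightSet pY EY y B) (hAB : (A ∩ B).Nonempty) :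
    IsTightSet pY EY y (A ∩ B) := by
  refine ⟨hAB, le_antisymm (sum_edgesIn_le hy hAB) ?_⟩
  have hunion : ∑ e ∈ edgesIn pY EY A ∪ edgesIn pY EY B, y e
      ≤ ∑ e ∈ edgesIn pY EY (A ∪ B), y e :=
    sum_le_sum_of_subset_of_nonneg
      (union_subset (edgesIn_mono subset_union_left) (edgesIn_mono subset_union_right))
      fun e _ _ => hy.1 e
  have hsplit := sum_union_inter (s₁ := edgesIn pY EY A) (s₂ := edgesIn pY EY B) (f := y)
  rw [edgesIn_inter] at hsplit
  have hcard : ((A ∪ B).card : ℝ) + (A ∩ B).card = A.card + B.card := by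
    exact_mod_cast card_union_add_card_inter A B
  linarith [sum_edgesIn_le hy (hA.1.mono (subset_union_left (s₂ := B))), hA.2, hB.2]

namespace IsMinimalTightSet

variable {S : Finset V}

theorem subset_of_mem_edgesIn (hy : y ∈ QPolytope pY EY EZ L)
    (hS : IsMinimalTightSet pY EY y S) {U : Finset V} (hU : IsTightSet pY EY y U) {e : ε}
    (heS : e ∈ edgesIn pY EY S) (heU : e ∈ edgesIn pY EY U) (hye : 0 < y e) : S ⊆ U := by
  have he : e ∈ edgesIn pY EY (U ∩ S) := by
    rw [← edgesIn_inter]; exact mem_inter.mpr ⟨heU, heS⟩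
  have hW := hU.inter hy hS.1.1 ⟨_, (mem_edgesIn.mp he).2.1⟩
  exact (hS.2 ⟨hW, one_lt_card_of_mem_edgesIn hy he hye⟩ inter_subset_right).trans
    inter_subset_left

theorem tightInseparable (hy : y ∈ QPolytope pY EY EZ L) (hpos : ∀ e ∈ EY, 0 < y e)
    (hS : IsMinimalTightSet pY EY y S) {a b : ε} (ha : a ∈ edgesIn pY EY S)
    (hb : b ∈ edgesIn pY EY S) : TightInseparable pY EY y a b :=
  tightInseparable_of_forall_subset subset_rfl
    (fun _ hU e he heU => hS.subset_of_mem_edgesIn hy hU he heU (hpos e (edgesIn_subset he)))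
    ha hb

theorem eq_of_mem_edgesIn (hy : y ∈ QPolytope pY EY EZ L) {S' : Finset V}
    (hS : IsMinimalTightSet pY EY y S) (hS' : IsMinimalTightSet pY EY y S') {e : ε}
    (he : e ∈ edgesIn pY EY S) (he' : e ∈ edgesIn pY EY S') (hye : 0 < y e) : S = S' :=
  (hS.subset_of_mem_edgesIn hy hS'.1.1 he he' hye).antisymm
    (hS'.subset_of_mem_edgesIn hy hS.1.1 he' he hye)

end IsMinimalTightSet

theorem subset_of_mem_edgesIn_sdiff (hy : y ∈ QPolytope pY EY EZ L) {S S₂ : Finset V}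
    (huniq : ∀ S', IsMinimalTightSet pY EY y S' → S' = S)
    (hS₂ : Minimal (fun U => IsTightSet pY EY y U ∧ S ⊂ U) S₂) {U : Finset V}
    (hU : IsTightSet pY EY y U) {e : ε} (he : e ∈ edgesIn pY EY S₂ \ edgesIn pY EY S)
    (heU : e ∈ edgesIn pY EY U) (hye : 0 < y e) : S₂ ⊆ U := by
  obtain ⟨heS₂, heS⟩ := mem_sdiff.mp he
  have heW : e ∈ edgesIn pY EY (U ∩ S₂) := by
    rw [← edgesIn_inter]; exact mem_inter.mpr ⟨heU, heS₂⟩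
  have hW := hU.inter hy hS₂.1.1 ⟨_, (mem_edgesIn.mp heW).2.1⟩
  obtain ⟨S', hS'W, hS'⟩ :=
    exists_isMinimalTightSet_subset hW (one_lt_card_of_mem_edgesIn hy heW hye)
  have hSW : S ⊂ U ∩ S₂ :=
    Finset.ssubset_iff_subset_ne.mpr ⟨huniq S' hS' ▸ hS'W, by rintro rfl; exact heS heW⟩
  exact (hS₂.2 ⟨hW, hSW⟩ inter_subset_right).trans inter_subset_left

theorem IsMinimalTightSet.exists_disjoint_tightInseparable [Nonempty V]
    (hy : y ∈ QPolytope pY EY EZ L) (hpos : ∀ e ∈ EY, 0 < y e) (hlt : ∀ e ∈ EY, y e < 1)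
    {S : Finset V} (hS : IsMinimalTightSet pY EY y S) (hSu : S ≠ univ) :
    ∃ A ⊆ EY, 1 < A.card ∧ Disjoint A (edgesIn pY EY S) ∧
      ∀ a ∈ A, ∀ b ∈ A, TightInseparable pY EY y a b := by
  by_cases huniq : ∀ S', IsMinimalTightSet pY EY y S' → S' = S
  · obtain ⟨S₂, -, hS₂⟩ := exists_minimal_le_of_wellFoundedLT
      (fun U => IsTightSet pY EY y U ∧ S ⊂ U) univ ⟨isTightSet_univ hy, ssubset_univ_iff.mpr hSu⟩
    refine ⟨edgesIn pY EY S₂ \ edgesIn pY EY S, sdiff_subset.trans edgesIn_subset, ?_,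
      sdiff_disjoint, fun a ha b hb => tightInseparable_of_forall_subset sdiff_subset
        (fun _ hU e he heU => subset_of_mem_edgesIn_sdiff hy huniq hS₂ hU he heU
          (hpos e (edgesIn_subset (sdiff_subset he)))) ha hb⟩
    refine one_lt_card_of_one_le_sum (fun e he => hlt e (edgesIn_subset (sdiff_subset he))) ?_
    rw [sum_sdiff_eq_sub (edgesIn_mono hS₂.1.2.subset), hS₂.1.1.2, hS.1.1.2]
    have hcard : (S.card : ℝ) + 1 ≤ S₂.card := by exact_mod_cast card_lt_card hS₂.1.2
    linarith
  · push Not at huniq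
    obtain ⟨S', hS', hne⟩ := huniq
    exact ⟨edgesIn pY EY S', edgesIn_subset, hS'.one_lt_card_edgesIn hlt,
      disjoint_left.mpr fun e he' he =>
        hne (hS'.eq_of_mem_edgesIn hy hS he' he (hpos e (edgesIn_subset he))),
      fun a ha b hb => hS'.tightInseparable hy hpos ha hb⟩

end TightSets

section Perturbation

variable {V ε : Type*} [Fintype V] [DecidableEq V] [Nonempty V] [DecidableEq ε]
  {pY : ε → V × V} {EY EZ : Finset ε} {L : ℕ} {y : ε → ℝ}

theorem notMem_extremePoints_QPolytope (hy : y ∈ QPolytope pY EY EZ L) {z : ε → ℝ}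
    (hz : z ≠ 0) (hzero : ∀ e, y e = 0 → z e = 0)
    (htight : ∀ U, IsTightSet pY EY y U → ∑ e ∈ edgesIn pY EY U, z e = 0)
    (hZ : ∑ e ∈ EZ, y e = L → ∑ e ∈ EZ, z e = 0) :
    y ∉ (QPolytope pY EY EZ L).extremePoints ℝ := by
  have hsum (C : Finset ε) (t : ℝ) :
      ∑ e ∈ C, (y + t • z) e = ∑ e ∈ C, y e + t * ∑ e ∈ C, z e := by
    simp [sum_add_distrib, mul_sum]
  have hEY : ∑ e ∈ EY, z e = 0 := by simpa using htight univ (isTightSet_univ hy)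
  have hsub (U : Finset V) : ∀ᶠ t in 𝓝 (0 : ℝ), U.Nonempty →
      ∑ e ∈ edgesIn pY EY U, y e + t * ∑ e ∈ edgesIn pY EY U, z e ≤ (U.card : ℝ) - 1 := by
    by_cases hU : U.Nonempty
    · exact (eventually_add_mul_le (sum_edgesIn_le hy hU) fun h => htight U ⟨hU, h⟩).mono
        fun _ h _ => h
    · exact Eventually.of_forall fun _ h => absurd h hU
  refine notMem_extremePoints_of_eventually_add_smul_mem hz ?_
  filter_upwards [(eventually_all_finset EY).mpr fun e _ =>
      eventually_le_add_mul (hy.1 e) fun h => hzero e h,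
    eventually_all.mpr hsub, eventually_le_add_mul hy.2.2.2.2 hZ]
    with t hnonneg hU hZt
  have hout (e : ε) (he : e ∉ EY) : (y + t • z) e = 0 := by
    simp [hy.2.1 e he, hzero e (hy.2.1 e he)]
  refine ⟨fun e => ?_, hout, by rw [hsum, hy.2.2.1, hEY]; ring,
    fun U hUne _ => hsum _ t ▸ hU U hUne, hsum _ t ▸ hZt⟩
  by_cases he : e ∈ EY
  · simpa using hnonneg e he
  · exact (hout e he).ge

theorem TightInseparable.sum_eq_and_mem_iff_notMem
    (hvert : y ∈ (QPolytope pY EY EZ L).extremePoints ℝ) {a b : ε} (hab : a ≠ b)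
    (ha : 0 < y a) (hb : 0 < y b) (hins : TightInseparable pY EY y a b) :
    ∑ e ∈ EZ, y e = L ∧ (a ∈ EZ ↔ b ∉ EZ) := by
  by_contra hcon
  have hsame : ∑ e ∈ EZ, y e = L → (a ∈ EZ ↔ b ∈ EZ) := fun h => by tauto
  refine notMem_extremePoints_QPolytope hvert.1 (z := Pi.single a 1 - Pi.single b 1)
    (fun h => by simpa [hab] using congrFun h a) (fun e he => ?_)
    (fun U hU => by simp [hins U hU])
    (fun h => by simp [hsame h]) hvert
  have hea : e ≠ a := by rintro rfl; linarith
  have heb : e ≠ b := by rintro rfl; linarith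
  simp [hea, heb]

theorem notMem_extremePoints_of_tightInseparable_pairs (hy : y ∈ QPolytope pY EY EZ L)
    {a b c d : ε} (ha : 0 < y a) (hb : 0 < y b) (hc : 0 < y c) (hd : 0 < y d)
    (hab : TightInseparable pY EY y a b) (hcd : TightInseparable pY EY y c d)
    (haZ : a ∈ EZ) (hbZ : b ∉ EZ) (hcZ : c ∈ EZ) (hdZ : d ∉ EZ) (hac : a ≠ c) :
    y ∉ (QPolytope pY EY EZ L).extremePoints ℝ := by
  have hab' : a ≠ b := by rintro rfl; exact hbZ haZ
  have had : a ≠ d := by rintro rfl; exact hdZ haZ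
  refine notMem_extremePoints_QPolytope hy
    (z := (Pi.single a 1 - Pi.single b 1) - (Pi.single c 1 - Pi.single d 1))
    (fun h => by simpa [hab', hac, had] using congrFun h a) (fun e he => ?_)
    (fun U hU => by simp [sum_sub_distrib, hab U hU, hcd U hU])
    (fun _ => by simp [sum_sub_distrib, haZ, hbZ, hcZ, hdZ])
  have hne : e ≠ a ∧ e ≠ b ∧ e ≠ c ∧ e ≠ d := by
    refine ⟨?_, ?_, ?_, ?_⟩ <;> rintro rfl <;> linarith
  simp [hne]

theorem exists_mem_notMem_of_tightInseparable
    (hvert : y ∈ (QPolytope pY EY EZ L).extremePoints ℝ) {A : Finset ε}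
    (hpos : ∀ e ∈ A, 0 < y e) (hA : 1 < A.card)
    (hins : ∀ a ∈ A, ∀ b ∈ A, TightInseparable pY EY y a b) :
    ∑ e ∈ EZ, y e = L ∧ ∃ a ∈ A, ∃ b ∈ A, a ∈ EZ ∧ b ∉ EZ := by
  obtain ⟨a, ha, b, hb, hab⟩ := one_lt_card.mp hA
  obtain ⟨hZ, hiff⟩ :=
    (hins a ha b hb).sum_eq_and_mem_iff_notMem hvert hab (hpos a ha) (hpos b hb)
  refine ⟨hZ, ?_⟩
  by_cases haZ : a ∈ EZ
  · exact ⟨a, ha, b, hb, haZ, hiff.mp haZ⟩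
  · exact ⟨b, hb, a, ha, not_not.mp (mt hiff.mpr haZ), haZ⟩

theorem not_isMinimalTightSet_univ (hvert : y ∈ (QPolytope pY EY EZ L).extremePoints ℝ)
    (hpos : ∀ e ∈ EY, 0 < y e) (hlt : ∀ e ∈ EY, y e < 1) :
    ¬ IsMinimalTightSet pY EY y univ := by
  intro hS
  have hins : ∀ a ∈ EY, ∀ b ∈ EY, TightInseparable pY EY y a b := fun a ha b hb =>
    hS.tightInseparable hvert.1 hpos (by simpa using ha) (by simpa using hb)
  obtain ⟨hZ, c, hc, -, -, hcZ, -⟩ := exists_mem_notMem_of_tightInseparable hvert hpos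
    (by simpa using hS.one_lt_card_edgesIn hlt) hins
  have hZc : EZ ∩ EY = {c} := by
    refine eq_singleton_iff_unique_mem.mpr ⟨mem_inter.mpr ⟨hcZ, hc⟩, fun e he => ?_⟩
    obtain ⟨heZ, heY⟩ := mem_inter.mp he
    by_contra hec
    exact ((hins e heY c hc).sum_eq_and_mem_iff_notMem hvert hec (hpos e heY)
      (hpos c hc)).2.mp heZ hcZ
  have hyc : ∑ e ∈ EZ, y e = y c := by
    rw [← sum_subset inter_subset_left fun e he hne =>
      hvert.1.2.1 e fun h => hne (mem_inter.mpr ⟨he, h⟩), hZc, sum_singleton]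
  have hL₀ : 0 < L := by exact_mod_cast hZ ▸ hyc ▸ hpos c hc
  have hL₁ : L < 1 := by exact_mod_cast hZ ▸ hyc ▸ hlt c hc
  omega

end Perturbation

theorem vertex_of_Q_has_integral_coordinate_general {V ε : Type*}
    [Fintype V] [DecidableEq V] [DecidableEq ε] [Nonempty V]
    (pY : ε → V × V) (EY EZ : Finset ε) (L : ℕ)
    (hEYne : EY.Nonempty)
    (y : ε → ℝ)
    (hvert : y ∈ Set.extremePoints ℝ (QPolytope pY EY EZ L))
    (hy : ∀ e ∈ EY, 0 < y e) :
    ∃ e' ∈ EY, y e' = 1 := by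
  by_contra! hne
  have hlt : ∀ e ∈ EY, y e < 1 := fun e he =>
    (le_one_of_mem_QPolytope hvert.1 he).lt_of_ne (hne e he)
  obtain ⟨e₀, he₀⟩ := hEYne
  obtain ⟨S, -, hS⟩ := exists_isMinimalTightSet_subset (isTightSet_univ hvert.1)
    (one_lt_card_of_mem_edgesIn hvert.1 (by simpa using he₀) (hy e₀ he₀))
  have hSu : S ≠ univ := by rintro rfl; exact not_isMinimalTightSet_univ hvert hy hlt hS
  have hposS : ∀ e ∈ edgesIn pY EY S, 0 < y e := fun e he => hy e (edgesIn_subset he)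
  obtain ⟨-, a, haS, b, hbS, haZ, hbZ⟩ := exists_mem_notMem_of_tightInseparable hvert hposS
    (hS.one_lt_card_edgesIn hlt) fun a ha b hb => hS.tightInseparable hvert.1 hy ha hb
  obtain ⟨A, hAY, hA, hdisj, hins⟩ := hS.exists_disjoint_tightInseparable hvert.1 hy hlt hSu
  obtain ⟨-, c, hc, d, hd, hcZ, hdZ⟩ :=
    exists_mem_notMem_of_tightInseparable hvert (fun e he => hy e (hAY he)) hA hins
  exact notMem_extremePoints_of_tightInseparable_pairs hvert.1 (hposS a haS) (hposS b hbS)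
    (hy c (hAY hc)) (hy d (hAY hd)) (hS.tightInseparable hvert.1 hy haS hbS) (hins c hc d hd)
    haZ hbZ hcZ hdZ (ne_of_mem_of_not_mem haS (disjoint_left.mp hdisj hc)) hvert

/-- If `y` is a vertex solution of `Q` with `y_e > 0` for every
`e ∈ E_Y` and `E_Y` is nonempty, then some `y_{e'} = 1` for an edge `e' ∈ E_Y`. -/
theorem vertex_of_Q_has_integral_coordinate {V ε : Type*}
    [Fintype V] [DecidableEq V] [DecidableEq ε] [Nonempty V]
    (pY : ε → V × V) (EY EZ : Finset ε) (L : ℕ)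
    (hconn : ConnectedOn pY EY)
    (hEZ : EZ ⊆ EY) (hL : L ≤ EZ.card)
    (hEYne : EY.Nonempty)
    (y : ε → ℝ)
    (hvert : y ∈ Set.extremePoints ℝ (QPolytope pY EY EZ L))
    (hy : ∀ e ∈ EY, 0 < y e) :
    ∃ e' ∈ EY, y e' = 1 :=
  vertex_of_Q_has_integral_coordinate_general pY EY EZ L hEYne y hvert hy
end

section
/- Let M_Y = (E_Y, I_Y) be a matroid on a finite ground set with rank function r_{M_Y}, and let y ∈ ℝ^{E_Y} with y_e ≥ 0 for all e ∈ E_Y satisfy Σ_{e∈U} y_e ≤ r_{M_Y}(U) for every subset U ⊆ E_Y. Let F(y) = {U ⊆ E_Y : Σ_{e∈U} y_e = r_{M_Y}(U)} be the family of tight sets and let L(y) be any maximal chain subfamily of F(y). Then the linear span of {χ(U) : U ∈ L(y)} equals the linear span of {χ(U) : U ∈ F(y)} in ℝ^{E_Y}. -/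
open Finset

/-- A matroid `M = (E, I)` on a finite ground set, given by its finite ground set and
the family of independent sets. -/
structure FinMatroid (α : Type*) [DecidableEq α] where
  /-- the ground set -/
  E : Finset α
  /-- the independence predicate -/
  Indep : Finset α → Prop
  indep_subset_ground : ∀ ⦃A⦄, Indep A → A ⊆ E
  indep_empty : Indep ∅
  indep_subset : ∀ ⦃A B⦄, A ⊆ B → Indep B → Indep A
  indep_exchange : ∀ ⦃A B⦄, Indep A → Indep B → A.card < B.card →
    ∃ e ∈ B \ A, Indep (insert e A)

open scoped Classical in
/-- The rank function of a matroid: `r_M(U) = max {|W| : W ⊆ U, W ∈ I}`. -/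
noncomputable def FinMatroid.rank {α : Type*} [DecidableEq α]
    (M : FinMatroid α) (U : Finset α) : ℕ :=
  ((U.powerset.filter fun W => M.Indep W).image Finset.card).max'
    ⟨0, Finset.mem_image.2 ⟨∅, Finset.mem_filter.2
      ⟨Finset.mem_powerset.2 (Finset.empty_subset U), M.indep_empty⟩,
      Finset.card_empty⟩⟩

/-- The characteristic vector of a finset. -/
def chi {α : Type*} [DecidableEq α] (S : Finset α) : α → ℝ :=
  fun e => if e ∈ S then 1 else 0

/-- A family of sets is a chain if any two of its members are comparable
under inclusion. -/
def ChainFamily {α : Type*} (𝒜 : Set (Finset α)) : Prop :=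
  ∀ A ∈ 𝒜, ∀ B ∈ 𝒜, A ⊆ B ∨ B ⊆ A

open scoped Classical

namespace FinMatroid
variable {α : Type*} [DecidableEq α] (M : FinMatroid α)

lemma card_le_rank {W U : Finset α} (hWU : W ⊆ U) (hW : M.Indep W) :
    W.card ≤ M.rank U :=
  Finset.le_max' _ _ (Finset.mem_image.2 ⟨W, Finset.mem_filter.2
    ⟨Finset.mem_powerset.2 hWU, hW⟩, rfl⟩)

lemma exists_rank_witness (U : Finset α) :
    ∃ W, W ⊆ U ∧ M.Indep W ∧ W.card = M.rank U := by
  have h : M.rank U ∈ (U.powerset.filter fun W => M.Indep W).image Finset.card :=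
    Finset.max'_mem _ _
  rw [Finset.mem_image] at h
  obtain ⟨W, hW, hc⟩ := h
  rw [Finset.mem_filter, Finset.mem_powerset] at hW
  exact ⟨W, hW.1, hW.2, hc⟩

lemma maximal_card_eq_rank {B U : Finset α} (hBU : B ⊆ U) (hB : M.Indep B)
    (hmax : ∀ e ∈ U, e ∉ B → ¬ M.Indep (insert e B)) : B.card = M.rank U := by
  refine le_antisymm (M.card_le_rank hBU hB) ?_
  obtain ⟨W, hWU, hW, hc⟩ := M.exists_rank_witness U
  by_contra h
  push_neg at h
  rw [← hc] at h
  obtain ⟨e, he, hind⟩ := M.indep_exchange hB hW h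
  rw [Finset.mem_sdiff] at he
  exact hmax e (hWU he.1) he.2 hind

lemma exists_basis_ext {B X : Finset α} (hB : M.Indep B) (hBX : B ⊆ X) :
    ∃ B', B ⊆ B' ∧ B' ⊆ X ∧ M.Indep B' ∧
      ∀ e ∈ X, e ∉ B' → ¬ M.Indep (insert e B') := by
  set S := X.powerset.filter (fun W => M.Indep W ∧ B ⊆ W) with hS
  have hne : S.Nonempty :=
    ⟨B, Finset.mem_filter.2 ⟨Finset.mem_powerset.2 hBX, hB, Finset.Subset.refl B⟩⟩
  obtain ⟨B', hB'S, hmax⟩ := S.exists_max_image Finset.card hne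
  rw [hS, Finset.mem_filter, Finset.mem_powerset] at hB'S
  refine ⟨B', hB'S.2.2, hB'S.1, hB'S.2.1, fun e heX heB' hind => ?_⟩
  have hmem : insert e B' ∈ S := Finset.mem_filter.2
    ⟨Finset.mem_powerset.2 (Finset.insert_subset heX hB'S.1), hind,
      hB'S.2.2.trans (Finset.subset_insert _ _)⟩
  have := hmax _ hmem
  rw [Finset.card_insert_of_notMem heB'] at this
  omega

lemma rank_submod (U V : Finset α) :
    M.rank (U ∪ V) + M.rank (U ∩ V) ≤ M.rank U + M.rank V := by
  obtain ⟨B, -, hBsub, hBind, hBmax⟩ :=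
    M.exists_basis_ext M.indep_empty (Finset.empty_subset (U ∩ V))
  obtain ⟨B', hBB', hB'sub, hB'ind, hB'max⟩ :=
    M.exists_basis_ext hBind (hBsub.trans (Finset.inter_subset_union))
  have hrB : B.card = M.rank (U ∩ V) := M.maximal_card_eq_rank hBsub hBind hBmax
  have hrB' : B'.card = M.rank (U ∪ V) := M.maximal_card_eq_rank hB'sub hB'ind hB'max
  have hBeq : B' ∩ (U ∩ V) = B := by
    apply Finset.Subset.antisymm
    · intro e he
      rw [Finset.mem_inter] at he
      by_contra heB
      exact hBmax e he.2 heB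
        (M.indep_subset (Finset.insert_subset he.1 hBB') hB'ind)
    · exact Finset.subset_inter hBB' hBsub
  have h1 : (B' ∩ U) ∪ (B' ∩ V) = B' := by
    rw [← Finset.inter_union_distrib_left]
    exact Finset.inter_eq_left.2 hB'sub
  have h2 : (B' ∩ U) ∩ (B' ∩ V) = B := by
    rw [← hBeq]; ext e; simp only [Finset.mem_inter]; tauto
  have hcard : (B' ∩ U).card + (B' ∩ V).card = B'.card + B.card := by
    rw [← Finset.card_union_add_card_inter, h1, h2]
  have hU : (B' ∩ U).card ≤ M.rank U :=
    M.card_le_rank Finset.inter_subset_right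
      (M.indep_subset Finset.inter_subset_left hB'ind)
  have hV : (B' ∩ V).card ≤ M.rank V :=
    M.card_le_rank Finset.inter_subset_right
      (M.indep_subset Finset.inter_subset_left hB'ind)
  omega

end FinMatroid

lemma tight_union_inter {α : Type*} [DecidableEq α] (MY : FinMatroid α) (y : α → ℝ)
    (hrank : ∀ U : Finset α, U ⊆ MY.E → ∑ e ∈ U, y e ≤ (MY.rank U : ℝ))
    {U V : Finset α} (hU : U ⊆ MY.E) (hV : V ⊆ MY.E)
    (htU : ∑ e ∈ U, y e = (MY.rank U : ℝ)) (htV : ∑ e ∈ V, y e = (MY.rank V : ℝ)) :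
    (∑ e ∈ U ∪ V, y e = (MY.rank (U ∪ V) : ℝ)) ∧
      (∑ e ∈ U ∩ V, y e = (MY.rank (U ∩ V) : ℝ)) := by
  have hsub := MY.rank_submod U V
  have h1 := hrank (U ∪ V) (Finset.union_subset hU hV)
  have h2 := hrank (U ∩ V) ((Finset.inter_subset_left).trans hU)
  have hsum : ∑ e ∈ U ∪ V, y e + ∑ e ∈ U ∩ V, y e = ∑ e ∈ U, y e + ∑ e ∈ V, y e :=
    Finset.sum_union_inter
  have hcast : ((MY.rank (U ∪ V) : ℝ) + (MY.rank (U ∩ V) : ℝ)) ≤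
      (MY.rank U : ℝ) + (MY.rank V : ℝ) := by exact_mod_cast hsub
  constructor <;> linarith

lemma chi_modular {α : Type*} [DecidableEq α] (U T : Finset α) :
    chi U = chi (U ∪ T) + chi (U ∩ T) - chi T := by
  funext e
  simp only [chi, Pi.add_apply, Pi.sub_apply, Finset.mem_union, Finset.mem_inter]
  by_cases h1 : e ∈ U <;> by_cases h2 : e ∈ T <;> simp [h1, h2]

lemma chi_mem_span_aux {α : Type*} [DecidableEq α]
    (MY : FinMatroid α) (y : α → ℝ)
    (hrank : ∀ U : Finset α, U ⊆ MY.E → ∑ e ∈ U, y e ≤ (MY.rank U : ℝ))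
    (F L : Set (Finset α))
    (hF : F = {U : Finset α | U ⊆ MY.E ∧ ∑ e ∈ U, y e = (MY.rank U : ℝ)})
    (hLF : L ⊆ F) (hLchain : ChainFamily L)
    (hLmax : ∀ U ∈ F, ChainFamily (insert U L) → U ∈ L) :
    ∀ (n : ℕ) (U : Finset α), U ∈ F →
      (MY.E.powerset.filter fun T => T ∈ L ∧ ¬(T ⊆ U ∨ U ⊆ T)).card ≤ n →
      chi U ∈ Submodule.span ℝ ((fun S => chi S) '' L) := by
  have hchaincase : ∀ U ∈ F, (∀ T ∈ L, T ⊆ U ∨ U ⊆ T) →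
      chi U ∈ Submodule.span ℝ ((fun S => chi S) '' L) := by
    intro U hU hcomp
    have hchain : ChainFamily (insert U L) := by
      intro A hA B hB
      rcases Set.mem_insert_iff.1 hA with h1 | h1 <;>
        rcases Set.mem_insert_iff.1 hB with h2 | h2
      · subst h1; subst h2; exact Or.inl (Finset.Subset.refl _)
      · subst h1; exact (hcomp B h2).symm
      · subst h2; exact hcomp A h1
      · exact hLchain A h1 B h2
    exact Submodule.subset_span ⟨U, hLmax U hU hchain, rfl⟩
  intro n
  induction n with
  | zero =>
    intro U hU hcard
    refine hchaincase U hU fun T hTL => ?_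
    by_contra hTU
    have hTE : T ⊆ MY.E := (hF ▸ hLF hTL).1
    have : T ∈ MY.E.powerset.filter fun T => T ∈ L ∧ ¬(T ⊆ U ∨ U ⊆ T) :=
      Finset.mem_filter.2 ⟨Finset.mem_powerset.2 hTE, hTL, hTU⟩
    have := Finset.card_pos.2 ⟨T, this⟩
    omega
  | succ n ih =>
    intro U hU hcard
    by_cases hex : ∃ T ∈ L, ¬(T ⊆ U ∨ U ⊆ T)
    · obtain ⟨T, hTL, hTU⟩ := hex
      have hTF := hLF hTL
      rw [hF] at hU hTF
      have hUE : U ⊆ MY.E := hU.1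
      have hTE : T ⊆ MY.E := hTF.1
      obtain ⟨htu, hti⟩ := tight_union_inter MY y hrank hUE hTE hU.2 hTF.2
      have hUF : (U ∪ T) ∈ F := by rw [hF]; exact ⟨Finset.union_subset hUE hTE, htu⟩
      have hIF : (U ∩ T) ∈ F := by
        rw [hF]; exact ⟨(Finset.inter_subset_left).trans hUE, hti⟩
      have hpres_u : ∀ T' ∈ L, (T' ⊆ U ∨ U ⊆ T') → (T' ⊆ U ∪ T ∨ U ∪ T ⊆ T') := by
        intro T' hT' h
        rcases h with h | h
        · exact Or.inl (h.trans Finset.subset_union_left)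
        · rcases hLchain T hTL T' hT' with h2 | h2
          · exact Or.inr (Finset.union_subset h h2)
          · exact absurd (Or.inr (h.trans h2)) hTU
      have hpres_i : ∀ T' ∈ L, (T' ⊆ U ∨ U ⊆ T') → (T' ⊆ U ∩ T ∨ U ∩ T ⊆ T') := by
        intro T' hT' h
        rcases h with h | h
        · rcases hLchain T' hT' T hTL with h2 | h2
          · exact Or.inl (Finset.subset_inter h h2)
          · exact absurd (Or.inl (h2.trans h)) hTU
        · exact Or.inr ((Finset.inter_subset_left).trans h)
      have hlt_u : (MY.E.powerset.filter fun T' => T' ∈ L ∧ ¬(T' ⊆ U ∪ T ∨ U ∪ T ⊆ T')).card ≤ n := by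
        have hss : (MY.E.powerset.filter fun T' => T' ∈ L ∧ ¬(T' ⊆ U ∪ T ∨ U ∪ T ⊆ T')) ⊂
            (MY.E.powerset.filter fun T' => T' ∈ L ∧ ¬(T' ⊆ U ∨ U ⊆ T')) := by
          refine Finset.ssubset_iff_of_subset ?_ |>.2
            ⟨T, Finset.mem_filter.2 ⟨Finset.mem_powerset.2 hTE, hTL, hTU⟩, ?_⟩
          · intro T' h'
            rw [Finset.mem_filter] at h' ⊢
            exact ⟨h'.1, h'.2.1, fun hc => h'.2.2 (hpres_u T' h'.2.1 hc)⟩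
          · intro hc
            exact (Finset.mem_filter.1 hc).2.2 (Or.inl Finset.subset_union_right)
        have := Finset.card_lt_card hss
        omega
      have hlt_i : (MY.E.powerset.filter fun T' => T' ∈ L ∧ ¬(T' ⊆ U ∩ T ∨ U ∩ T ⊆ T')).card ≤ n := by
        have hss : (MY.E.powerset.filter fun T' => T' ∈ L ∧ ¬(T' ⊆ U ∩ T ∨ U ∩ T ⊆ T')) ⊂
            (MY.E.powerset.filter fun T' => T' ∈ L ∧ ¬(T' ⊆ U ∨ U ⊆ T')) := by
          refine Finset.ssubset_iff_of_subset ?_ |>.2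
            ⟨T, Finset.mem_filter.2 ⟨Finset.mem_powerset.2 hTE, hTL, hTU⟩, ?_⟩
          · intro T' h'
            rw [Finset.mem_filter] at h' ⊢
            exact ⟨h'.1, h'.2.1, fun hc => h'.2.2 (hpres_i T' h'.2.1 hc)⟩
          · intro hc
            exact (Finset.mem_filter.1 hc).2.2 (Or.inr Finset.inter_subset_right)
        have := Finset.card_lt_card hss
        omega
      have h1 := ih (U ∪ T) hUF hlt_u
      have h2 := ih (U ∩ T) hIF hlt_i
      have h3 : chi T ∈ Submodule.span ℝ ((fun S => chi S) '' L) :=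
        Submodule.subset_span ⟨T, hTL, rfl⟩
      rw [chi_modular U T]
      exact sub_mem (add_mem h1 h2) h3
    · push_neg at hex
      exact hchaincase U hU hex

/-- If `y ≥ 0` satisfies the rank constraints
`∑_{e ∈ U} y_e ≤ r_{M_Y}(U)` for every `U ⊆ E_Y`, `F(y)` is the family of tight sets
and `L(y)` is any maximal chain subfamily of `F(y)`, then
`span {χ(U) : U ∈ L(y)} = span {χ(U) : U ∈ F(y)}`. -/
theorem span_maximal_chain_eq_span_tight {α : Type*} [DecidableEq α]
    (MY : FinMatroid α) (y : α → ℝ)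
    (hy0 : ∀ e ∈ MY.E, 0 ≤ y e)
    (hrank : ∀ U : Finset α, U ⊆ MY.E → ∑ e ∈ U, y e ≤ (MY.rank U : ℝ))
    (F L : Set (Finset α))
    (hF : F = {U : Finset α | U ⊆ MY.E ∧ ∑ e ∈ U, y e = (MY.rank U : ℝ)})
    (hLF : L ⊆ F)
    (hLchain : ChainFamily L)
    (hLmax : ∀ U ∈ F, ChainFamily (insert U L) → U ∈ L) :
    Submodule.span ℝ ((fun U => chi U) '' L) =
      Submodule.span ℝ ((fun U => chi U) '' F) := by
  refine le_antisymm (Submodule.span_mono (Set.image_mono hLF)) ?_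
  rw [Submodule.span_le]
  rintro x ⟨U, hU, rfl⟩
  exact chi_mem_span_aux MY y hrank F L hF hLF hLchain hLmax
    (MY.E.powerset.filter fun T => T ∈ L ∧ ¬(T ⊆ U ∨ U ⊆ T)).card U hU le_rfl
end
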